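/- Let d, n, K ∈ ℕ with d, n, K ≥ 1. There exists a feedforward network f : ℝ → ℝ of depth K + 3 and width 3n with activation functions ReLU and floor such that for every q ∈ {0, 1, …, n−1} and every x ∈ [2q, 2q+1), f(x) = 3^{1−q}·φ_K(x − 2q). -/

import Mathlib

open Finset Real Set MeasureTheory

noncomputable section

/-- Matrix–vector product with explicit inner dimension `m`. -/
def mulVecN (W : ℕ → ℕ → ℝ) (m : ℕ) (v : ℕ → ℝ) : ℕ → ℝ :=
  fun i => ∑ j ∈ Finset.range m, W i j * v j

/-- Matrix–matrix product with explicit inner dimension `m`. -/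
def matMulN (A : ℕ → ℕ → ℝ) (m : ℕ) (B : ℕ → ℕ → ℝ) : ℕ → ℕ → ℝ :=
  fun i j => ∑ t ∈ Finset.range m, A i t * B t j

/-- The ReLU activation. -/
def reluF : ℝ → ℝ := fun x => max x 0

/-- The floor activation. -/
def floorF : ℝ → ℝ := fun x => (⌊x⌋ : ℝ)

/-- Hidden layers of a feedforward network acting on vectors:
`ffLayers dims Wt b act l x` is the output of the `l`-th hidden layer. -/
def ffLayers (dims : ℕ → ℕ) (Wt : ℕ → ℕ → ℕ → ℝ) (b : ℕ → ℕ → ℝ)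
    (act : ℕ → ℕ → ℝ → ℝ) : ℕ → (ℕ → ℝ) → ℕ → ℝ
  | 0, x => x
  | l + 1, x => fun i =>
      act (l + 1) i (mulVecN (Wt (l + 1)) (dims l) (ffLayers dims Wt b act l x) i + b (l + 1) i)

/-- `f` is a feedforward neural network function from `ℝ^k` to `ℝ^{k'}` of depth `L` and
width `W`, whose activation functions (which may vary between rows and layers) all belong
to `A`.  Vectors are represented as functions `ℕ → ℝ`; only the first `k` coordinates of the
input and the first `k'` coordinates of the output are relevant. -/
def IsFFNet (k k' L W : ℕ) (A : Set (ℝ → ℝ)) (f : (ℕ → ℝ) → ℕ → ℝ) : Prop :=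
  ∃ (dims : ℕ → ℕ) (Wt : ℕ → ℕ → ℕ → ℝ) (b : ℕ → ℕ → ℝ) (act : ℕ → ℕ → ℝ → ℝ),
    dims 0 = k ∧ dims L = k' ∧ (∀ l, 0 < l → l < L → dims l ≤ W) ∧
    (∀ l i, act l i ∈ A) ∧
    ∀ x, f x = mulVecN (Wt L) (dims (L - 1)) (ffLayers dims Wt b act (L - 1) x)

/-- Hidden layers of a feedforward block acting columnwise on matrices, with
column-dependent biases. -/
def ffBlockLayers (dims : ℕ → ℕ) (Wt : ℕ → ℕ → ℕ → ℝ) (B : ℕ → ℕ → ℕ → ℝ)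
    (act : ℕ → ℕ → ℝ → ℝ) : ℕ → (ℕ → ℕ → ℝ) → ℕ → ℕ → ℝ
  | 0, X => X
  | l + 1, X => fun i s =>
      act (l + 1) i
        (mulVecN (Wt (l + 1)) (dims l) (fun t => ffBlockLayers dims Wt B act l X t s) i
          + B (l + 1) i s)

/-- `F` is a feedforward block from `ℝ^{k×n}` to `ℝ^{k'×n}` of depth `L` and width `W`,
with activation functions in `A`; it acts on each column by the same affine maps, the bias
matrices may have distinct columns, and in each layer every row uses some activation from
`A` (possibly varying between rows and layers). -/
def IsFFBlock (k k' L W : ℕ) (A : Set (ℝ → ℝ)) (F : (ℕ → ℕ → ℝ) → ℕ → ℕ → ℝ) : Prop :=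
  ∃ (dims : ℕ → ℕ) (Wt : ℕ → ℕ → ℕ → ℝ) (B : ℕ → ℕ → ℕ → ℝ) (act : ℕ → ℕ → ℝ → ℝ),
    dims 0 = k ∧ dims L = k' ∧ (∀ l, 0 < l → l < L → dims l ≤ W) ∧
    (∀ l i, act l i ∈ A) ∧
    ∀ X i s,
      F X i s = mulVecN (Wt L) (dims (L - 1))
        (fun t => ffBlockLayers dims Wt B act (L - 1) X t s) i

/-- `F` is a single-head softmax self-attention layer on `m × n` matrices:
`F(X) = X + W_O W_V X σ_S[(W_K X)ᵀ (W_Q X)]`, where the softmax is applied columnwise. -/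
def IsSelfAttn (m n : ℕ) (F : (ℕ → ℕ → ℝ) → ℕ → ℕ → ℝ) : Prop :=
  ∃ (hs : ℕ) (WO WV WK WQ : ℕ → ℕ → ℝ),
    ∀ X i j,
      F X i j = X i j +
        matMulN (matMulN WO hs WV) m
          (matMulN X n (fun a b =>
            Real.exp (∑ u ∈ Finset.range hs, matMulN WK m X u a * matMulN WQ m X u b) /
              ∑ t ∈ Finset.range n,
                Real.exp (∑ u ∈ Finset.range hs, matMulN WK m X u t * matMulN WQ m X u b))) i j

/-- An affine map on matrices, acting columnwise: `A(Y) = W Y + b` with `W` a `k'×k`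
matrix and `b` a bias matrix. -/
def IsAffineM (k : ℕ) (A : (ℕ → ℕ → ℝ) → ℕ → ℕ → ℝ) : Prop :=
  ∃ (W : ℕ → ℕ → ℝ) (b : ℕ → ℕ → ℝ),
    ∀ Y i s, A Y i s = mulVecN W k (fun t => Y t s) i + b i s

/-- Embedding of a `d × n` real matrix into the `ℕ`-indexed representation. -/
def embedM {d n : ℕ} (X : Fin d → Fin n → ℝ) : ℕ → ℕ → ℝ :=
  fun i j => if h : i < d ∧ j < n then X ⟨i, h.1⟩ ⟨j, h.2⟩ else 0

/-- The Hölder class `H^β_Q([0,1]^{d×n}, ℝ^{d×n})`: every component of `f` is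
`(β,Q)`-Hölder on the unit cube w.r.t. the entrywise sup distance. -/
def HolderClassM (d n : ℕ) (β Q : ℝ)
    (f : (Fin d → Fin n → ℝ) → Fin d → Fin n → ℝ) : Prop :=
  ∀ X Y : Fin d → Fin n → ℝ,
    (∀ p q, X p q ∈ Set.Icc (0:ℝ) 1) → (∀ p q, Y p q ∈ Set.Icc (0:ℝ) 1) →
    ∀ r s, |f X r s - f Y r s| ≤ Q * dist X Y ^ β

/-- The `j`-th binary digit of `x` (terminating expansion for dyadic rationals). -/
def binDigit (x : ℝ) (j : ℕ) : ℤ :=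
  ⌊(2:ℝ) ^ j * x⌋ - 2 * ⌊(2:ℝ) ^ (j - 1) * x⌋

/-- The truncated inner function `φ_K(x) = Σ_{j=1}^K 2 a_j^x 3^{-1-D(j-1)}`. -/
def phiK (D K : ℕ) (x : ℝ) : ℝ :=
  ∑ j ∈ Finset.Icc 1 K, 2 * (binDigit x j : ℝ) * ((3:ℝ) ^ (1 + D * (j - 1)))⁻¹

/-- The inner function `φ(x) = Σ_{j=1}^∞ 2 a_j^x 3^{-1-D(j-1)}`. -/
def phiInf (D : ℕ) (x : ℝ) : ℝ :=
  ∑' j : ℕ, 2 * (binDigit x (j + 1) : ℝ) * ((3:ℝ) ^ (1 + D * j))⁻¹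

/-- The inner matrix `Z(X)`: `Z(X)_{rs}` is independent of `r` and equals
`3^{Kdn+1} Σ_{q=1}^n Σ_{p=1}^d 3^{-((p-1)n+q)} φ_K(X_{pq}) + 1 + (s-1) 3^{Kdn}`. -/
def innerZ (d n K : ℕ) (X : Fin d → Fin n → ℝ) (s : Fin n) : ℝ :=
  (3:ℝ) ^ (K * d * n + 1) *
      (∑ q : Fin n, ∑ p : Fin d,
        ((3:ℝ) ^ ((p : ℕ) * n + (q : ℕ) + 1))⁻¹ * phiK (d * n) K (X p q))
    + 1 + (s : ℕ) * (3:ℝ) ^ (K * d * n)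

/-- The Kolmogorov–Arnold inner sum `3 Σ_{q=1}^n Σ_{p=1}^d 3^{-((p-1)n+q)} φ(X_{pq})`. -/
def innerKA (d n : ℕ) (X : Fin d → Fin n → ℝ) : ℝ :=
  3 * ∑ q : Fin n, ∑ p : Fin d,
    ((3:ℝ) ^ ((p : ℕ) * n + (q : ℕ) + 1))⁻¹ * phiInf (d * n) (X p q)

/-- The unit cube `[0,1]^{d×n}`. -/
def unitBox (d n : ℕ) : Set (Fin d → Fin n → ℝ) :=
  {X | ∀ p q, X p q ∈ Set.Icc (0:ℝ) 1}

/-- `f` admits a Kolmogorov–Arnold representation with outer functions `g r s`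
(defined on the middle-thirds Cantor set), which are Hölder with exponent
`β log 2 / (dn log 3)` and constant `2^β Q`. -/
def HasKARep (d n : ℕ) (β Q : ℝ) (f : (Fin d → Fin n → ℝ) → Fin d → Fin n → ℝ)
    (g : Fin d → Fin n → ℝ → ℝ) : Prop :=
  (∀ r s, ∀ x ∈ cantorSet, ∀ y ∈ cantorSet,
      |g r s x - g r s y| ≤ (2:ℝ) ^ β * Q * |x - y| ^ (β * Real.log 2 / ((d * n : ℕ) * Real.log 3))) ∧
  (∀ X ∈ unitBox d n, ∀ r s, f X r s = g r s (innerKA d n X))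

/-!
The digits `a_j` with `j ≥ 1` of `x` and `x - 2q` agree, so it suffices to produce
`3^(1-q) φ_K(x)`. With `t = 3^D` and `F_j = ⌊2^j x⌋`, Horner's scheme applied to
`a_j = F_j - 2 F_{j-1}` gives
`3^(1+D(K-1)) φ_K(x) / 2 = F_K + (t - 2) Σ_{j=1}^{K-1} t^(K-1-j) F_j - 2 t^(K-1) F_0`.
One floor neuron per layer accumulates this integer, because `⌊2^j x + c N⌋ = F_j + c N` for
integers `c`, `N`. Finally, for `φ ∈ [0,1]` the hinge difference `relu(φ + j - q) - relu(j - q)`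
equals `φ` if `q ≤ j` and `0` otherwise, so a telescoping combination of hinges turns `φ`
into `3^(1-q) φ`.
-/

lemma binDigit_succ (x : ℝ) (j : ℕ) :
    binDigit x (j + 1) = ⌊2 * (2 ^ j * x)⌋ - 2 * ⌊(2:ℝ) ^ j * x⌋ := by
  rw [binDigit, Nat.add_sub_cancel, pow_succ, mul_comm _ (2:ℝ), mul_assoc]

lemma binDigit_nonneg (x : ℝ) {j : ℕ} (hj : 1 ≤ j) : 0 ≤ binDigit x j := by
  obtain ⟨j, rfl⟩ := Nat.exists_eq_add_of_le' hj
  have : 2 * ⌊(2:ℝ) ^ j * x⌋ ≤ ⌊2 * (2 ^ j * x)⌋ :=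
    Int.le_floor.mpr (by push_cast; linarith [Int.floor_le ((2:ℝ) ^ j * x)])
  rw [binDigit_succ]; omega

lemma binDigit_le_one (x : ℝ) {j : ℕ} (hj : 1 ≤ j) : binDigit x j ≤ 1 := by
  obtain ⟨j, rfl⟩ := Nat.exists_eq_add_of_le' hj
  have : ⌊2 * (2 ^ j * x)⌋ < 2 * ⌊(2:ℝ) ^ j * x⌋ + 2 :=
    Int.floor_lt.mpr (by push_cast; linarith [Int.lt_floor_add_one ((2:ℝ) ^ j * x)])
  rw [binDigit_succ]; omega

lemma binDigit_sub_two_mul (x : ℝ) (m : ℤ) {j : ℕ} (hj : 1 ≤ j) :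
    binDigit (x - 2 * m) j = binDigit x j := by
  obtain ⟨j, rfl⟩ := Nat.exists_eq_add_of_le' hj
  have h : ∀ i : ℕ, (2:ℝ) ^ i * (x - 2 * m) = 2 ^ i * x - ((2 ^ (i + 1) * m : ℤ) : ℝ) := by
    intro i; push_cast; ring
  simp only [binDigit, h, Int.floor_sub_intCast, Nat.add_sub_cancel]
  ring

lemma phiK_sub_two_mul (D K : ℕ) (x : ℝ) (m : ℤ) : phiK D K (x - 2 * m) = phiK D K x :=
  Finset.sum_congr rfl fun j hj => by
    rw [binDigit_sub_two_mul x m (Finset.mem_Icc.mp hj).1]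

lemma phiK_nonneg (D K : ℕ) (x : ℝ) : 0 ≤ phiK D K x :=
  Finset.sum_nonneg fun j hj => by
    have : (0:ℝ) ≤ binDigit x j := by exact_mod_cast binDigit_nonneg x (Finset.mem_Icc.mp hj).1
    positivity

lemma phiK_le_one_sub {D : ℕ} (hD : 1 ≤ D) (K : ℕ) (x : ℝ) :
    phiK D K x ≤ 1 - ((3:ℝ) ^ K)⁻¹ := by
  induction K with
  | zero => simp [phiK]
  | succ K ih =>
    rw [phiK, Finset.sum_Icc_succ_top (by omega), ← phiK, Nat.add_sub_cancel]
    have hdigit : (binDigit x (K + 1) : ℝ) ≤ 1 := by exact_mod_cast binDigit_le_one x (by omega)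
    have hpow : ((3:ℝ) ^ (1 + D * K))⁻¹ ≤ ((3:ℝ) ^ (K + 1))⁻¹ :=
      inv_anti₀ (by positivity) (pow_le_pow_right₀ (by norm_num) (by nlinarith))
    have hpos : (0:ℝ) ≤ ((3:ℝ) ^ (1 + D * K))⁻¹ := by positivity
    calc phiK D K x + 2 * binDigit x (K + 1) * ((3:ℝ) ^ (1 + D * K))⁻¹
        ≤ 1 - ((3:ℝ) ^ K)⁻¹ + 2 * ((3:ℝ) ^ (K + 1))⁻¹ := by nlinarith
      _ = 1 - ((3:ℝ) ^ (K + 1))⁻¹ := by rw [pow_succ]; field_simp; ring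

lemma phiK_le_one {D : ℕ} (hD : 1 ≤ D) (K : ℕ) (x : ℝ) : phiK D K x ≤ 1 :=
  (phiK_le_one_sub hD K x).trans (sub_le_self _ (by positivity))

def hornerFloor (t : ℤ) (x : ℝ) : ℕ → ℤ
  | 0 => 0
  | m + 1 => ⌊(2:ℝ) ^ (m + 1) * x⌋ + t * hornerFloor t x m

lemma three_pow_mul_phiK_succ (D k : ℕ) (x : ℝ) :
    (3:ℝ) ^ (1 + D * k) * phiK D (k + 1) x
      = 2 * (⌊(2:ℝ) ^ (k + 1) * x⌋ + ((3:ℝ) ^ D - 2) * hornerFloor (3 ^ D) x k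
          - 2 * (3:ℝ) ^ (D * k) * ⌊x⌋) := by
  induction k with
  | zero => simp [phiK, binDigit, hornerFloor]; ring
  | succ k ih =>
    rw [phiK, Finset.sum_Icc_succ_top (by omega), ← phiK, Nat.add_sub_cancel, mul_add,
      show 1 + D * (k + 1) = (1 + D * k) + D by ring, pow_add, mul_right_comm, ih]
    simp only [binDigit, hornerFloor, Nat.add_sub_cancel]
    push_cast
    field_simp
    ring

lemma phiK_eq_hornerFloor {D K : ℕ} (hK : 1 ≤ K) (x : ℝ) :
    2 / 3 ^ (1 + D * (K - 1)) *
        ((⌊(2:ℝ) ^ K * x⌋ + (3 ^ D - 2) * hornerFloor (3 ^ D) x (K - 1) : ℤ) : ℝ)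
      - 4 / 3 * ⌊x⌋ = phiK D K x := by
  obtain ⟨k, rfl⟩ := Nat.exists_eq_add_of_le' hK
  rw [Nat.add_sub_cancel, eq_comm, ← mul_right_inj' (by positivity : (3:ℝ) ^ (1 + D * k) ≠ 0),
    three_pow_mul_phiK_succ]
  push_cast
  field_simp
  ring

lemma relu_add_sub_relu {φ : ℝ} (hφ0 : 0 ≤ φ) (hφ1 : φ ≤ 1) (j q : ℕ) :
    reluF (φ + j - q) - reluF ((j : ℝ) - q) = if q ≤ j then φ else 0 := by
  unfold reluF
  split_ifs with h
  · have : (q:ℝ) ≤ j := by exact_mod_cast h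
    rw [max_eq_left (by linarith), max_eq_left (by linarith)]; ring
  · have : (j:ℝ) + 1 ≤ q := by exact_mod_cast (by omega : j + 1 ≤ q)
    rw [max_eq_right (by linarith), max_eq_right (by linarith)]; ring

lemma sum_range_sub_mul_ite_le {R : Type*} [CommRing R] (A : ℕ → R) (φ : R) {q n : ℕ}
    (hq : q ≤ n) :
    ∑ j ∈ Finset.range n, (A j - A (j + 1)) * (if q ≤ j then φ else 0) = (A q - A n) * φ := by
  induction n, hq using Nat.le_induction with
  | base => simpa using Finset.sum_eq_zero fun j hj => by simp [Finset.mem_range.mp hj]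
  | succ n hqn ih => rw [Finset.sum_range_succ, ih, if_pos hqn]; ring

lemma mulVecN_three (W : ℕ → ℕ → ℝ) (v : ℕ → ℝ) (i : ℕ) :
    mulVecN W 3 v i = W i 0 * v 0 + W i 1 * v 1 + W i 2 * v 2 := by
  simp [mulVecN, Finset.sum_range_succ]

namespace PhiKNet

def dims (n K l : ℕ) : ℕ :=
  if l = 0 then 1 else if l ≤ K + 1 then 3 else if l = K + 2 then 2 * n else 1

def inputWeight : ℕ → ℕ → ℝ
  | 0, 0 => 1
  | 2, 0 => 1 / 2
  | _, _ => 0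

def chainWeight (c : ℝ) : ℕ → ℕ → ℝ
  | 0, 0 => 2
  | 1, 0 => 2
  | 1, 1 => c
  | 2, 2 => 1
  | _, _ => 0

-- `-(8/3) q = -(4/3) ⌊x⌋` cancels the `F_0` term of the Horner identity; the extra `-q` centres
-- the hinges at `q`.
def hingeWeight (n : ℕ) (γ : ℝ) (i : ℕ) : ℕ → ℝ
  | 1 => if i < n then γ else 0
  | 2 => if i < n then -(8 / 3 + 1) else -1
  | _ => 0

def hingeBias (n i : ℕ) : ℝ := if i < n then (i : ℝ) else ((i - n : ℕ) : ℝ)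

def scale (n j : ℕ) : ℝ := if j < n then (3:ℝ) ^ ((1 : ℤ) - j) else 0

def outputWeight (n j : ℕ) : ℝ :=
  if j < n then scale n j - scale n (j + 1) else -(scale n (j - n) - scale n (j - n + 1))

/-- Hidden layer `m + 1 ≤ K` holds `(2^m x, hornerFloor (3^D) x m, ⌊x/2⌋)` in neurons `0, 1, 2`;
layer `K + 1` uses the coefficient `3^D - 2` instead, and layer `K + 2` holds the `2n` hinges. -/
def weight (n K D l : ℕ) : ℕ → ℕ → ℝ :=
  if l = 1 then inputWeight
  else if l ≤ K then chainWeight (3 ^ D)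
  else if l = K + 1 then chainWeight (3 ^ D - 2)
  else if l = K + 2 then hingeWeight n (2 / 3 ^ (1 + D * (K - 1)))
  else fun _ => outputWeight n

def bias (n K l : ℕ) : ℕ → ℝ := if l = K + 2 then hingeBias n else 0

def act (K l i : ℕ) : ℝ → ℝ := if l ≤ K + 1 ∧ i ≠ 0 then floorF else reluF

abbrev layer (n K D : ℕ) : ℕ → (ℕ → ℝ) → ℕ → ℝ :=
  ffLayers (dims n K) (weight n K D) (bias n K) (act K)

def net (n K D : ℕ) (v : ℕ → ℝ) : ℕ → ℝ :=
  mulVecN (weight n K D (K + 3)) (dims n K (K + 2)) (layer n K D (K + 2) v)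

lemma isFFNet {n K : ℕ} (hn : 1 ≤ n) (D : ℕ) :
    IsFFNet 1 1 (K + 3) (3 * n) {reluF, floorF} (net n K D) := by
  refine ⟨dims n K, weight n K D, bias n K, act K, by simp [dims], by simp [dims], ?_, ?_,
    fun v => rfl⟩
  · intro l hl hlK
    unfold dims
    split_ifs <;> omega
  · intro l i
    unfold act
    split_ifs <;> simp

variable {n K D : ℕ} {x : ℝ}

lemma layer_succ_apply (l : ℕ) (v : ℕ → ℝ) (i : ℕ) :
    layer n K D (l + 1) v i = act K (l + 1) i
      (mulVecN (weight n K D (l + 1)) (dims n K l) (layer n K D l v) i + bias n K (l + 1) i) :=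
  rfl

lemma layer_one (hx : 0 ≤ x) :
    layer n K D 1 (fun _ => x) 0 = x ∧ layer n K D 1 (fun _ => x) 1 = 0 ∧
      layer n K D 1 (fun _ => x) 2 = ⌊x / 2⌋ := by
  simp [ffLayers, mulVecN, dims, weight, inputWeight, bias, act, reluF, floorF, hx]
  ring_nf

lemma layer_succ_of_chain {l m : ℕ} {c N q : ℤ} (hl : 1 ≤ l) (hlK : l ≤ K)
    (hW : weight n K D (l + 1) = chainWeight c) (hx : 0 ≤ x)
    (h : layer n K D l (fun _ => x) 0 = 2 ^ m * x ∧ layer n K D l (fun _ => x) 1 = N ∧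
      layer n K D l (fun _ => x) 2 = q) :
    layer n K D (l + 1) (fun _ => x) 0 = 2 ^ (m + 1) * x ∧
      layer n K D (l + 1) (fun _ => x) 1 = (⌊(2:ℝ) ^ (m + 1) * x⌋ + c * N : ℤ) ∧
      layer n K D (l + 1) (fun _ => x) 2 = q := by
  obtain ⟨h0, h1, h2⟩ := h
  have hdim : dims n K l = 3 := by unfold dims; split_ifs <;> omega
  have hb : bias n K (l + 1) = 0 := by unfold bias; rw [if_neg (by omega)]
  simp only [layer_succ_apply, hdim, mulVecN_three, hW, hb, h0, h1, h2, act, chainWeight]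
  have h2m : (2:ℝ) * (2 ^ m * x) = 2 ^ (m + 1) * x := by ring
  simp only [h2m, (by omega : l + 1 ≤ K + 1), true_and]
  refine ⟨?_, ?_, ?_⟩
  · simp [reluF]; positivity
  · simp [floorF, ← Int.cast_mul, Int.floor_add_intCast]
  · simp [floorF]

lemma layer_chain (hx : 0 ≤ x) {m : ℕ} (hm : m < K) :
    layer n K D (m + 1) (fun _ => x) 0 = 2 ^ m * x ∧
      layer n K D (m + 1) (fun _ => x) 1 = hornerFloor (3 ^ D) x m ∧
      layer n K D (m + 1) (fun _ => x) 2 = ⌊x / 2⌋ := by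
  induction m with
  | zero => simpa [hornerFloor] using layer_one hx
  | succ m ih =>
    have hW : weight n K D (m + 2) = chainWeight ((3 ^ D : ℤ) : ℝ) := by
      rw [weight, if_neg (by omega), if_pos (by omega)]; push_cast; rfl
    exact layer_succ_of_chain (by omega) (by omega) hW hx (ih (by omega))

lemma layer_last (hK : 1 ≤ K) (hx : 0 ≤ x) :
    2 / 3 ^ (1 + D * (K - 1)) * layer n K D (K + 1) (fun _ => x) 1 - 4 / 3 * ⌊x⌋ = phiK D K x ∧
      layer n K D (K + 1) (fun _ => x) 2 = ⌊x / 2⌋ := by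
  obtain ⟨k, rfl⟩ := Nat.exists_eq_add_of_le' hK
  have hW : weight n (k + 1) D (k + 2) = chainWeight ((3 ^ D - 2 : ℤ) : ℝ) := by
    rw [weight, if_neg (by omega), if_neg (by omega), if_pos rfl]; push_cast; rfl
  obtain ⟨-, h1, h2⟩ := layer_succ_of_chain le_add_self le_rfl hW hx (layer_chain hx (by omega))
  refine ⟨?_, h2⟩
  rw [h1, ← phiK_eq_hornerFloor (by omega), Nat.add_sub_cancel]

lemma layer_hinge {φ q : ℝ}
    (hφ : 2 / 3 ^ (1 + D * (K - 1)) * layer n K D (K + 1) (fun _ => x) 1 - 8 / 3 * q = φ)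
    (h2 : layer n K D (K + 1) (fun _ => x) 2 = q) {j : ℕ} (hj : j < n) :
    layer n K D (K + 2) (fun _ => x) j = reluF (φ + j - q) ∧
      layer n K D (K + 2) (fun _ => x) (n + j) = reluF (j - q) := by
  have hdim : dims n K (K + 1) = 3 := by simp [dims]
  have hW : weight n K D (K + 2) = hingeWeight n (2 / 3 ^ (1 + D * (K - 1))) := by
    simp [weight]
  have hb : bias n K (K + 2) = hingeBias n := by simp [bias]
  have hact : ∀ i, act K (K + 2) i = reluF := by simp [act]
  constructor <;> rw [layer_succ_apply, hdim, mulVecN_three, h2, hW, hb, hact]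
  · simp only [hingeWeight, hingeBias, if_pos hj, ← hφ]; ring_nf
  · simp only [hingeWeight, hingeBias, if_neg (by omega : ¬ n + j < n), Nat.add_sub_cancel_left]
    ring_nf

lemma net_apply (hD : 1 ≤ D) (hK : 1 ≤ K) {q : ℕ} (hq : q < n)
    (hx : x ∈ Set.Ico (2 * (q : ℝ)) (2 * q + 1)) :
    net n K D (fun _ => x) 0 = (3:ℝ) ^ ((1 : ℤ) - q) * phiK D K x := by
  obtain ⟨hx1, hx2⟩ := hx
  have hx0 : 0 ≤ x := le_trans (by positivity) hx1
  have hhalf : ⌊x / 2⌋ = q := by rw [Int.floor_eq_iff]; push_cast; constructor <;> linarith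
  have hfloor : ⌊x⌋ = 2 * q := by rw [Int.floor_eq_iff]; push_cast; constructor <;> linarith
  obtain ⟨hlast, h2⟩ := layer_last (n := n) hK hx0
  rw [hhalf, Int.cast_natCast] at h2
  have hφ : 2 / 3 ^ (1 + D * (K - 1)) * layer n K D (K + 1) (fun _ => x) 1 - 8 / 3 * q =
      phiK D K x := by
    rw [← hlast, hfloor]; push_cast; ring
  have hout : ∀ j < n, outputWeight n j * layer n K D (K + 2) (fun _ => x) j
      + outputWeight n (n + j) * layer n K D (K + 2) (fun _ => x) (n + j)
      = (scale n j - scale n (j + 1)) * (if q ≤ j then phiK D K x else 0) := by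
    intro j hj
    obtain ⟨hj1, hj2⟩ := layer_hinge hφ h2 hj
    have hrelu := relu_add_sub_relu (phiK_nonneg D K x) (phiK_le_one hD K x) j q
    rw [hj1, hj2, outputWeight, if_pos hj, outputWeight, if_neg (by omega),
      Nat.add_sub_cancel_left, ← hrelu]
    ring
  have hdim : dims n K (K + 2) = n + n := by simp [dims]; omega
  have hW : weight n K D (K + 3) 0 = outputWeight n := by simp [weight]
  rw [net, mulVecN, hdim, Finset.sum_range_add, ← Finset.sum_add_distrib, hW,
    Finset.sum_congr rfl fun j hj => hout j (Finset.mem_range.mp hj),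
    sum_range_sub_mul_ite_le _ _ hq.le]
  simp [scale, hq]

end PhiKNet

theorem stmt10 (d n K : ℕ) (hd : 1 ≤ d) (hn : 1 ≤ n) (hK : 1 ≤ K) :
    ∃ F : (ℕ → ℝ) → ℕ → ℝ,
      IsFFNet 1 1 (K + 3) (3 * n) {reluF, floorF} F ∧
      ∀ q : ℕ, q < n → ∀ x : ℝ, x ∈ Set.Ico (2 * (q : ℝ)) (2 * (q : ℝ) + 1) →
        F (fun _ => x) 0 = (3:ℝ) ^ ((1 : ℤ) - (q : ℤ)) * phiK (d * n) K (x - 2 * (q : ℝ)) := by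
  refine ⟨PhiKNet.net n K (d * n), PhiKNet.isFFNet hn _, fun q hq x hx => ?_⟩
  rw [show x - 2 * (q : ℝ) = x - 2 * ((q : ℤ) : ℝ) by push_cast; rfl, phiK_sub_two_mul]
  exact PhiKNet.net_apply (Nat.mul_pos hd hn) hK hq hx

end
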